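/- Let C ⊆ F_2^n be a binary triorthogonal code satisfying (C^{⋆2})^⊥ ⊆ C. Then (C^{⋆2})^⊥ = Hull(C) = C ∩ C^⊥. -/

import Mathlib

open Matrix

/-- A binary matrix is triorthogonal if every Schur (coordinatewise) product of two
distinct rows and of three pairwise distinct rows has even Hamming weight. -/
def Triorthogonal {m n : ℕ} (G : Matrix (Fin m) (Fin n) (ZMod 2)) : Prop :=
  (∀ i j : Fin m, i ≠ j → Even (hammingNorm (G i * G j))) ∧
  (∀ i j k : Fin m, i ≠ j → i ≠ k → j ≠ k → Even (hammingNorm (G i * G j * G k)))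

/-- The Schur square `C^{⋆2}` of a binary linear code. -/
def schurSquare {n : ℕ} (C : Submodule (ZMod 2) (Fin n → ZMod 2)) :
    Submodule (ZMod 2) (Fin n → ZMod 2) :=
  Submodule.span (ZMod 2) {x | ∃ c ∈ C, ∃ c' ∈ C, x = c * c'}

/-- The dual code `C^⊥`. -/
def dualCode {n : ℕ} (C : Submodule (ZMod 2) (Fin n → ZMod 2)) :
    Submodule (ZMod 2) (Fin n → ZMod 2) where
  carrier := {u | ∀ c ∈ C, dotProduct u c = 0}
  add_mem' := by
    intro a b ha hb c hc
    simp [add_dotProduct, ha c hc, hb c hc]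
  zero_mem' := by
    intro c hc
    simp
  smul_mem' := by
    intro r a ha c hc
    simp [smul_dotProduct, ha c hc]

/-- A binary code is triorthogonal if it has a triorthogonal generator matrix
(whose number of rows equals the dimension of the code). -/
def IsTriorthogonalCode {n : ℕ} (C : Submodule (ZMod 2) (Fin n → ZMod 2)) : Prop :=
  ∃ (m : ℕ) (G : Matrix (Fin m) (Fin n) (ZMod 2)), Triorthogonal G ∧
    Submodule.span (ZMod 2) (Set.range fun i => G i) = C ∧
    m = Module.finrank (ZMod 2) C

/-! Over `𝔽₂` every word is idempotent under the Schur product, so `C ≤ C^{⋆2}` and hence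
`(C^{⋆2})^⊥ ≤ C^⊥`; with the hypothesis this gives `(C^{⋆2})^⊥ ≤ C ⊓ C^⊥`. Conversely, `C^{⋆2}` is
spanned by products of two rows of a generator matrix `G`. A square of a row is the row itself, and
triorthogonality of `G` makes each product of two distinct rows orthogonal to every row, hence to `C`;
so every word of `C ⊓ C^⊥` is orthogonal to all of `C^{⋆2}`. -/

section BinaryVectors

lemma ZMod.two_pi_mul_self {ι : Type*} (v : ι → ZMod 2) : v * v = v :=
  funext fun i => (by decide : ∀ a : ZMod 2, a * a = a) (v i)

variable {ι : Type*} [Fintype ι]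

lemma ZMod.two_sum_eq_hammingNorm (v : ι → ZMod 2) : ∑ i, v i = (hammingNorm v : ZMod 2) := by
  classical
  have h_one : ∀ i ∈ Finset.univ.filter (v · ≠ 0), v i = 1 := fun i hi =>
    (by decide : ∀ a : ZMod 2, a ≠ 0 → a = 1) (v i) (Finset.mem_filter.1 hi).2
  rw [hammingNorm, ← Finset.sum_filter_ne_zero, Finset.sum_congr rfl h_one, Finset.sum_const,
    nsmul_one]

lemma ZMod.two_sum_eq_zero_of_even_hammingNorm {v : ι → ZMod 2} (h : Even (hammingNorm v)) :
    ∑ i, v i = 0 := by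
  rw [ZMod.two_sum_eq_hammingNorm, (ZMod.natCast_eq_zero_iff_even).2 h]

end BinaryVectors

section Duality

open scoped Pointwise

variable {n : ℕ}

lemma mem_dualCode_span_iff {S : Set (Fin n → ZMod 2)} {y : Fin n → ZMod 2} :
    y ∈ dualCode (Submodule.span (ZMod 2) S) ↔ ∀ s ∈ S, y ⬝ᵥ s = 0 :=
  ⟨fun h s hs => h s (Submodule.subset_span hs), fun h _ hc =>
    (Submodule.span_le (p := LinearMap.ker (dotProductBilin (ZMod 2) (ZMod 2) y))).2 h hc⟩

lemma dualCode_antitone : Antitone (dualCode (n := n)) :=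
  fun _ _ hCD _ hy c hc => hy c (hCD hc)

lemma le_schurSquare (C : Submodule (ZMod 2) (Fin n → ZMod 2)) : C ≤ schurSquare C :=
  fun c hc => Submodule.subset_span ⟨c, hc, c, hc, (ZMod.two_pi_mul_self c).symm⟩

lemma schurSquare_eq_mul (C : Submodule (ZMod 2) (Fin n → ZMod 2)) : schurSquare C = C * C := by
  rw [Submodule.mul_eq_span_mul_set, schurSquare]
  congr 1
  ext x
  simp [Set.mem_mul, eq_comm]

lemma schurSquare_span (S : Set (Fin n → ZMod 2)) :
    schurSquare (Submodule.span (ZMod 2) S) = Submodule.span (ZMod 2) (S * S) := by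
  rw [← Submodule.span_mul_span, schurSquare_eq_mul]

end Duality

namespace Triorthogonal

variable {m n : ℕ} {G : Matrix (Fin m) (Fin n) (ZMod 2)}

lemma mul_rows_dotProduct_row (hG : Triorthogonal G) {i j : Fin m} (hij : i ≠ j) (k : Fin m) :
    (G i * G j) ⬝ᵥ G k = 0 := by
  have h_pair := ZMod.two_sum_eq_zero_of_even_hammingNorm (hG.1 i j hij)
  change ∑ l, (G i * G j * G k) l = 0
  by_cases hik : i = k
  · rwa [← hik, mul_right_comm, ZMod.two_pi_mul_self]
  by_cases hjk : j = k
  · rwa [← hjk, mul_assoc, ZMod.two_pi_mul_self]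
  exact ZMod.two_sum_eq_zero_of_even_hammingNorm (hG.2 i j k hij hik hjk)

lemma mul_rows_mem_dualCode (hG : Triorthogonal G) {i j : Fin m} (hij : i ≠ j) :
    G i * G j ∈ dualCode (Submodule.span (ZMod 2) (Set.range G)) :=
  mem_dualCode_span_iff.2 <| by
    rintro _ ⟨k, rfl⟩
    exact hG.mul_rows_dotProduct_row hij k

lemma inf_dualCode_le_dualCode_schurSquare (hG : Triorthogonal G) :
    Submodule.span (ZMod 2) (Set.range G) ⊓ dualCode (Submodule.span (ZMod 2) (Set.range G)) ≤
      dualCode (schurSquare (Submodule.span (ZMod 2) (Set.range G))) := by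
  rintro x ⟨hxC, hxD⟩
  rw [schurSquare_span, mem_dualCode_span_iff]
  rintro _ ⟨_, ⟨i, rfl⟩, _, ⟨j, rfl⟩, rfl⟩
  change x ⬝ᵥ (G i * G j) = 0
  by_cases hij : i = j
  · rw [← hij, ZMod.two_pi_mul_self]
    exact hxD _ (Submodule.subset_span ⟨i, rfl⟩)
  · rw [dotProduct_comm]
    exact hG.mul_rows_mem_dualCode hij x hxC

end Triorthogonal

theorem stmt12 {n : ℕ} (C : Submodule (ZMod 2) (Fin n → ZMod 2))
    (hC : IsTriorthogonalCode C)
    (hsub : dualCode (schurSquare C) ≤ C) :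
    dualCode (schurSquare C) = C ⊓ dualCode C := by
  obtain ⟨_, G, hG, rfl, -⟩ := hC
  exact le_antisymm (le_inf hsub (dualCode_antitone (le_schurSquare _)))
    hG.inf_dualCode_le_dualCode_schurSquare
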